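/- Let $n \ge 2$, $p \ge 1$, let $c$ be a real number, and let $h^{\alpha}$ ($\alpha = 1, \dots, p$) be symmetric $n \times n$ real matrices. Set $S = \sum_{\alpha=1}^{p} \sum_{i,j=1}^{n} (h^{\alpha}_{ij})^2$ and $T_{\alpha} = \sum_{i=1}^{n} h^{\alpha}_{ii}$. Then $c + \sum_{\alpha=1}^{p} \big[ h^{\alpha}_{11} h^{\alpha}_{22} - (h^{\alpha}_{12})^2 \big] \ \ge\ \frac{1}{2} \Big( 2c + \frac{\sum_{\alpha} T_{\alpha}^2}{n-1} - S \Big) + \sum_{\alpha=1}^{p} \sum_{1 \le i < j \le n,\ (i,j) \ne (1,2)} (h^{\alpha}_{ij})^2$. -/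

import Mathlib

/-!
The inequality is the sum over `α` of the same inequality for each symmetric matrix `A = h^α`.
Expanding `∑ A_kl² = ∑ A_kk² + 2 ∑_{k<l} A_kl²`, the off-diagonal terms cancel and
what remains is Chen's inequality `(tr A)² ≤ (n - 1)(∑ A_kk² + 2 A₁₁ A₂₂)`. That is Cauchy–Schwarz
applied to the `n - 1` numbers `A₁₁ + A₂₂, A₃₃, …, A_nn`.
-/

open Finset

theorem sq_sum_le_card_sub_one_mul_sum_sq_add_two_mul {ι : Type*} [Fintype ι] [DecidableEq ι]
    (d : ι → ℝ) {i j : ι} (hij : i ≠ j) :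
    (∑ k, d k) ^ 2 ≤ (Fintype.card ι - 1 : ℝ) * (∑ k, d k ^ 2 + 2 * d i * d j) := by
  set R := (univ.erase i).erase j
  have hj : j ∈ univ.erase i := mem_erase.2 ⟨hij.symm, mem_univ j⟩
  have hiR : i ∉ R := fun h => (mem_erase.1 (mem_erase.1 h).2).1 rfl
  have hsplit (f : ι → ℝ) : ∑ k, f k = f i + f j + ∑ k ∈ R, f k := by
    rw [← add_sum_erase _ _ (mem_univ i), ← add_sum_erase _ _ hj, add_assoc]
  have hcard : (#(insert i R) : ℝ) = Fintype.card ι - 1 := by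
    have : #(insert i R) + 1 = Fintype.card ι := by
      rw [card_insert_of_notMem hiR, card_erase_add_one hj, card_erase_add_one (mem_univ i),
        card_univ]
    rw [eq_sub_iff_add_eq]
    exact_mod_cast this
  have cs := sq_sum_le_card_mul_sum_sq (s := insert i R)
    (f := fun k => if k = i then d i + d j else d k)
  have hR (e : ℕ) : ∑ k ∈ R, (if k = i then d i + d j else d k) ^ e = ∑ k ∈ R, d k ^ e :=
    sum_congr rfl fun k hk => by rw [if_neg (ne_of_mem_of_not_mem hk hiR)]
  have hR1 := hR 1
  simp only [pow_one] at hR1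
  simp only [sum_insert hiR, if_pos, hR, hR1, hcard] at cs
  rw [hsplit, hsplit (d · ^ 2)]
  linarith

section StrictUpper

variable {ι R : Type*} [Fintype ι] [LinearOrder ι]

theorem sum_sum_eq_sum_diag_add_two_mul_sum_lt [CommSemiring R] {f : ι → ι → R}
    (hf : ∀ i j, f i j = f j i) :
    ∑ i, ∑ j, f i j = ∑ i, f i i + 2 * ∑ i, ∑ j, if i < j then f i j else 0 := by
  have htri (i j : ι) : f i j = (if i < j then f i j else 0) + (if i = j then f i j else 0) +
      (if j < i then f i j else 0) := by
    rcases lt_trichotomy i j with h | rfl | h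
    · simp [h, h.ne, h.not_gt]
    · simp
    · simp [h, h.ne', h.not_gt]
  have hlower : ∑ i, ∑ j, (if j < i then f i j else 0) = ∑ i, ∑ j, if i < j then f i j else 0 := by
    rw [sum_comm]
    exact sum_congr rfl fun i _ => sum_congr rfl fun j _ => by rw [hf]
  calc ∑ i, ∑ j, f i j = ∑ i, ∑ j, ((if i < j then f i j else 0) +
        (if i = j then f i j else 0) + (if j < i then f i j else 0)) :=
        sum_congr rfl fun i _ => sum_congr rfl fun j _ => htri i j
    _ = _ := by
      simp only [sum_add_distrib, hlower, sum_ite_eq, mem_univ, if_true]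
      ring

theorem sum_sum_lt_of_ne_pair_eq_sub [AddCommGroup R] (f : ι → ι → R) {a b : ι} (hab : a < b) :
    (∑ i, ∑ j, if i < j ∧ ¬(i = a ∧ j = b) then f i j else 0) =
      (∑ i, ∑ j, if i < j then f i j else 0) - f a b := by
  have hsplit (i j : ι) : (if i < j ∧ ¬(i = a ∧ j = b) then f i j else 0) =
      (if i < j then f i j else 0) - (if i = a ∧ j = b then f i j else 0) := by
    by_cases hp : i = a ∧ j = b
    · obtain ⟨rfl, rfl⟩ := hp
      simp [hab]
    · by_cases h : i < j <;> simp [h, hp]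
  simp only [hsplit, sum_sub_distrib, ite_and, sum_ite_irrel, sum_ite_eq', mem_univ, if_true,
    sum_const_zero]

end StrictUpper

theorem Matrix.IsSymm.le_diag_mul_diag_sub_sq {ι : Type*} [Fintype ι] [LinearOrder ι]
    {A : Matrix ι ι ℝ} (hA : A.IsSymm) {i j : ι} (hij : i < j) :
    (A.trace ^ 2 / (Fintype.card ι - 1) - ∑ k, ∑ l, A k l ^ 2) / 2 +
        (∑ k, ∑ l, if k < l ∧ ¬(k = i ∧ l = j) then A k l ^ 2 else 0) ≤
      A i i * A j j - A i j ^ 2 := by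
  have hcard : (0 : ℝ) < Fintype.card ι - 1 := by
    have : 1 < Fintype.card ι := Fintype.one_lt_card_iff.2 ⟨i, j, hij.ne⟩
    rw [sub_pos]
    exact_mod_cast this
  have htrace : A.trace ^ 2 / (Fintype.card ι - 1) ≤ ∑ k, A k k ^ 2 + 2 * A i i * A j j := by
    rw [div_le_iff₀' hcard]
    exact sq_sum_le_card_sub_one_mul_sum_sq_add_two_mul A.diag hij.ne
  rw [sum_sum_eq_sum_diag_add_two_mul_sum_lt (fun k l => by rw [hA.apply k l]),
    sum_sum_lt_of_ne_pair_eq_sub _ hij]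
  linarith

/-- Algebraic content of Lemma 4.1: for symmetric `n × n` matrices
`h^α` (`α = 1, …, p`, `n ≥ 2`), with `S` the total squared norm and
`T_α` the traces,
`c + ∑_α [h^α₁₁ h^α₂₂ - (h^α₁₂)²]
  ≥ ½(2c + (∑_α T_α²)/(n-1) - S) + ∑_α ∑_{i<j, (i,j)≠(1,2)} (h^α_{ij})²`. -/
theorem sectional_curvature_lower_bound (n p : ℕ) (hn : 2 ≤ n)
    (c : ℝ) (h : Fin p → Fin n → Fin n → ℝ)
    (hsymm : ∀ α i j, h α i j = h α j i)
    (S : ℝ) (hS : S = ∑ α, ∑ i, ∑ j, (h α i j) ^ 2)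
    (T : Fin p → ℝ) (hT : ∀ α, T α = ∑ i, h α i i) :
    c + ∑ α, (h α ⟨0, by omega⟩ ⟨0, by omega⟩ * h α ⟨1, by omega⟩ ⟨1, by omega⟩
        - (h α ⟨0, by omega⟩ ⟨1, by omega⟩) ^ 2) ≥
      (1 / 2) * (2 * c + (∑ α, (T α) ^ 2) / (n - 1) - S)
        + ∑ α, ∑ i, ∑ j,
            if i < j ∧ ¬(i = (⟨0, by omega⟩ : Fin n) ∧ j = (⟨1, by omega⟩ : Fin n))
            then (h α i j) ^ 2 else 0 := by
  have hbound (α : Fin p) := Matrix.IsSymm.le_diag_mul_diag_sub_sq (A := h α)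
    (Matrix.IsSymm.ext fun i j => hsymm α j i) (i := ⟨0, by omega⟩) (j := ⟨1, by omega⟩)
    (Fin.mk_lt_mk.2 one_pos)
  have hsum := sum_le_sum fun α (_ : α ∈ univ) => hbound α
  simp only [Fintype.card_fin, Matrix.trace, Matrix.diag, ← hT, sum_add_distrib, sum_sub_distrib,
    ← sum_div] at hsum
  rw [hS, sum_sub_distrib]
  linarith
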